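/- arXiv:0806.3164 — 7 statements merged into one kernel-verified Lean document; each statement's English description precedes it below -/
import Mathlib

section
/- If r(t) is a non-negative eigenvalue of a density matrix ρ(t) evolving under a Lindblad equation with transition operators h_α (and any Hamiltonian H), then its time derivative satisfies ṙ(t) ≥ −(Σ_α ‖h_α‖²) r(t). -/
/-!
By the Hellmann–Feynman argument, differentiating `r = ⟪ψ, ρ ψ⟫` gives `ṙ = ⟪ψ, L(ρ) ψ⟫`: the terms
containing `ψ'` cancel because `ρ` is self-adjoint with eigenvector `ψ ⊥ ψ'`. In this expectation
the Hamiltonian commutator vanishes, and each dissipator term equals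
`⟪h† ψ, ρ h† ψ⟫ - r ‖h ψ‖²`, whose first part is nonnegative since `ρ ≥ 0` and whose second is
at least `-r ‖h‖²`.
-/

open Matrix
open scoped Matrix.Norms.L2Operator ComplexOrder

/-- The GKS--Lindblad generator with Hamiltonian `H` and transition operators `h α`. -/
noncomputable def lindblad {n : ℕ} {ι : Type*} [Fintype ι]
    (H : Matrix (Fin n) (Fin n) ℂ) (h : ι → Matrix (Fin n) (Fin n) ℂ)
    (ρ : Matrix (Fin n) (Fin n) ℂ) : Matrix (Fin n) (Fin n) ℂ :=
  -Complex.I • (H * ρ - ρ * H) +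
    ∑ α, (h α * ρ * (h α)ᴴ - (1/2 : ℂ) • ((h α)ᴴ * h α * ρ + ρ * ((h α)ᴴ * h α)))

open scoped InnerProductSpace

namespace Matrix

variable {m : Type*} [Fintype m] [DecidableEq m]

theorem hasDerivAt_toEuclideanLin_apply {A : ℝ → Matrix m m ℂ} {A' : Matrix m m ℂ}
    {x : ℝ → EuclideanSpace ℂ m} {x' : EuclideanSpace ℂ m} {t : ℝ}
    (hA : HasDerivAt A A' t) (hx : HasDerivAt x x' t) :
    HasDerivAt (fun s => toEuclideanLin (A s) (x s))
      (toEuclideanLin A' (x t) + toEuclideanLin (A t) x') t := by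
  -- `HasDerivAt.clm_apply` needs operators that are linear over the time variable's field `ℝ`.
  let Φ : Matrix m m ℂ →L[ℝ] EuclideanSpace ℂ m →L[ℝ] EuclideanSpace ℂ m :=
    (ContinuousLinearMap.restrictScalarsL ℂ _ _ ℝ ℝ).comp
      (LinearMap.toContinuousLinearMap
        ((toEuclideanLin.trans LinearMap.toContinuousLinearMap).toLinearMap.restrictScalars ℝ))
  have hΦ : HasDerivAt (fun s => Φ (A s)) (Φ A') t := Φ.hasFDerivAt.comp_hasDerivAt t hA
  exact hΦ.clm_apply hx

theorem hellmann_feynman {A : ℝ → Matrix m m ℂ} {A' : Matrix m m ℂ}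
    {x : ℝ → EuclideanSpace ℂ m} {x' : EuclideanSpace ℂ m} {r : ℝ → ℝ} {r' t : ℝ}
    (hA : HasDerivAt A A' t) (hx : HasDerivAt x x' t) (hr : HasDerivAt r r' t)
    (hAt : (A t).IsHermitian) (hnorm : ∀ s, ‖x s‖ = 1) (horth : ⟪x t, x'⟫_ℂ = 0)
    (heig : ∀ s, toEuclideanLin (A s) (x s) = (r s : ℂ) • x s) :
    r' = Complex.re ⟪x t, toEuclideanLin A' (x t)⟫_ℂ := by
  have hr_eq : r = fun s => Complex.re ⟪x s, toEuclideanLin (A s) (x s)⟫_ℂ := by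
    funext s
    rw [heig, inner_smul_right, inner_self_eq_norm_sq_to_K, hnorm]
    simp
  have hderiv : HasDerivAt r
      (Complex.re (⟪x t, toEuclideanLin A' (x t) + toEuclideanLin (A t) x'⟫_ℂ
        + ⟪x', toEuclideanLin (A t) (x t)⟫_ℂ)) t := by
    rw [hr_eq]
    exact Complex.reCLM.hasFDerivAt.comp_hasDerivAt t
      (hx.inner ℂ (hasDerivAt_toEuclideanLin_apply hA hx))
  have hboundary :
      ⟪x t, toEuclideanLin (A t) x'⟫_ℂ + ⟪x', toEuclideanLin (A t) (x t)⟫_ℂ = 0 := by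
    rw [← isSymmetric_toEuclideanLin_iff.mpr hAt, heig, inner_smul_left, inner_smul_right,
      horth, inner_eq_zero_symm.mp horth, mul_zero, mul_zero, add_zero]
  rw [hr.unique hderiv, inner_add_right, add_assoc, hboundary, add_zero]

variable {𝕜 : Type*} [RCLike 𝕜]

theorem inner_toEuclideanLin_conjTranspose_mul_self (A : Matrix m m 𝕜) (v : EuclideanSpace 𝕜 m) :
    ⟪v, toEuclideanLin (Aᴴ * A) v⟫_𝕜 = (‖toEuclideanLin A v‖ ^ 2 : 𝕜) := by
  rw [toLpLin_mul_same, LinearMap.comp_apply, toEuclideanLin_conjTranspose_eq_adjoint,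
    LinearMap.adjoint_inner_right, inner_self_eq_norm_sq_to_K]

theorem inner_toEuclideanLin_mul_mul_conjTranspose (A ρ : Matrix m m 𝕜)
    (v : EuclideanSpace 𝕜 m) :
    ⟪v, toEuclideanLin (A * ρ * Aᴴ) v⟫_𝕜
      = ⟪toEuclideanLin Aᴴ v, toEuclideanLin ρ (toEuclideanLin Aᴴ v)⟫_𝕜 := by
  rw [toLpLin_mul_same, toLpLin_mul_same, LinearMap.comp_apply, LinearMap.comp_apply,
    ← LinearMap.adjoint_inner_left, ← toEuclideanLin_conjTranspose_eq_adjoint]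

section Eigenvector

variable {ρ : Matrix m m 𝕜} {v : EuclideanSpace 𝕜 m} {r : ℝ}

theorem inner_toEuclideanLin_mul_of_eigen (A : Matrix m m 𝕜)
    (hv : toEuclideanLin ρ v = (r : 𝕜) • v) :
    ⟪v, toEuclideanLin (A * ρ) v⟫_𝕜 = r * ⟪v, toEuclideanLin A v⟫_𝕜 := by
  rw [toLpLin_mul_same, LinearMap.comp_apply, hv, map_smul, inner_smul_right]

theorem inner_toEuclideanLin_eigen_mul (hρ : ρ.IsHermitian)
    (hv : toEuclideanLin ρ v = (r : 𝕜) • v) (A : Matrix m m 𝕜) :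
    ⟪v, toEuclideanLin (ρ * A) v⟫_𝕜 = r * ⟪v, toEuclideanLin A v⟫_𝕜 := by
  rw [toLpLin_mul_same, LinearMap.comp_apply, ← isSymmetric_toEuclideanLin_iff.mpr hρ, hv,
    inner_smul_left, RCLike.conj_ofReal]

end Eigenvector

end Matrix

section Lindblad

variable {n : ℕ} {ι : Type*} [Fintype ι] (H : Matrix (Fin n) (Fin n) ℂ)
  (h : ι → Matrix (Fin n) (Fin n) ℂ) {ρ : Matrix (Fin n) (Fin n) ℂ}
  {v : EuclideanSpace ℂ (Fin n)} {r : ℝ}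

theorem inner_toEuclideanLin_lindblad_of_eigen (hρ : ρ.IsHermitian)
    (hv : toEuclideanLin ρ v = (r : ℂ) • v) :
    ⟪v, toEuclideanLin (lindblad H h ρ) v⟫_ℂ
      = ∑ α, (⟪toEuclideanLin (h α)ᴴ v, toEuclideanLin ρ (toEuclideanLin (h α)ᴴ v)⟫_ℂ
          - r * ‖toEuclideanLin (h α) v‖ ^ 2) := by
  simp only [lindblad, map_add, map_sub, map_smul, map_sum, LinearMap.add_apply,
    LinearMap.sub_apply, LinearMap.smul_apply, LinearMap.sum_apply,
    inner_add_right, inner_sub_right, inner_smul_right, inner_sum,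
    inner_toEuclideanLin_mul_of_eigen _ hv, inner_toEuclideanLin_eigen_mul hρ hv,
    inner_toEuclideanLin_conjTranspose_mul_self, inner_toEuclideanLin_mul_mul_conjTranspose,
    sub_self, mul_zero, zero_add]
  refine Finset.sum_congr rfl fun α _ => ?_
  -- the generic lemma produced the `RCLike` cast of the norm, which `ring` sees as a new atom
  rw [RCLike.ofReal_eq_complex_ofReal]
  ring

theorem neg_sum_sq_norm_mul_le_re_inner_lindblad (hρ : ρ.PosSemidef)
    (hv : toEuclideanLin ρ v = (r : ℂ) • v) (hr : 0 ≤ r) (hv_norm : ‖v‖ = 1) :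
    -(∑ α, ‖h α‖ ^ 2) * r ≤ (⟪v, toEuclideanLin (lindblad H h ρ) v⟫_ℂ).re := by
  rw [inner_toEuclideanLin_lindblad_of_eigen H h hρ.1 hv, Complex.re_sum, neg_mul,
    Finset.sum_mul, ← Finset.sum_neg_distrib]
  refine Finset.sum_le_sum fun α _ => ?_
  have hpos : 0 ≤ (⟪toEuclideanLin (h α)ᴴ v, toEuclideanLin ρ (toEuclideanLin (h α)ᴴ v)⟫_ℂ).re :=
    (isPositive_toEuclideanLin_iff.mpr hρ).re_inner_nonneg_right _
  have hbound : ‖toEuclideanLin (h α) v‖ ≤ ‖h α‖ := by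
    have := (h α).l2_opNorm_mulVec v
    rwa [hv_norm, mul_one] at this
  have hloss : r * ‖toEuclideanLin (h α) v‖ ^ 2 ≤ ‖h α‖ ^ 2 * r := by
    rw [mul_comm]; gcongr
  simp only [Complex.sub_re]
  norm_cast
  linarith

end Lindblad

theorem stmt0_general {n : ℕ} {ι : Type*} [Fintype ι]
    (H : Matrix (Fin n) (Fin n) ℂ)
    (h : ι → Matrix (Fin n) (Fin n) ℂ)
    (ρ : ℝ → Matrix (Fin n) (Fin n) ℂ)
    (hρ : ∀ t, (ρ t).PosSemidef ∧ (ρ t).trace = 1)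
    (hρode : ∀ t, HasDerivAt ρ (lindblad H h (ρ t)) t)
    (r r' : ℝ → ℝ) (hr : ∀ t, HasDerivAt r (r' t) t)
    (hrpos : ∀ t, 0 ≤ r t)
    (ψ ψ' : ℝ → EuclideanSpace ℂ (Fin n))
    (hψ : ∀ t, HasDerivAt ψ (ψ' t) t)
    (hψnorm : ∀ t, ‖ψ t‖ = 1)
    (hψorth : ∀ t, inner ℂ (ψ t) (ψ' t) = (0 : ℂ))
    (heig : ∀ t, Matrix.toEuclideanLin (ρ t) (ψ t) = (r t : ℂ) • ψ t)
    (t : ℝ) :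
    r' t ≥ -(∑ α, ‖h α‖ ^ 2) * r t := by
  have hρt := (hρ t).1
  rw [ge_iff_le, Matrix.hellmann_feynman (hρode t) (hψ t) (hr t) hρt.1 hψnorm (hψorth t) heig]
  exact neg_sum_sq_norm_mul_le_re_inner_lindblad H h hρt (heig t) (hrpos t) (hψnorm t)

/-- If `r t` is a non-negative eigenvalue of a density matrix `ρ t` evolving under a
Lindblad equation, then `ṙ(t) ≥ -(∑ α ‖h α‖²) r(t)` (operator norm). -/
theorem stmt0 {n : ℕ} {ι : Type*} [Fintype ι]
    (H : Matrix (Fin n) (Fin n) ℂ) (hH : H.IsHermitian)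
    (h : ι → Matrix (Fin n) (Fin n) ℂ)
    (ρ : ℝ → Matrix (Fin n) (Fin n) ℂ)
    (hρ : ∀ t, (ρ t).PosSemidef ∧ (ρ t).trace = 1)
    (hρode : ∀ t, HasDerivAt ρ (lindblad H h (ρ t)) t)
    (r r' : ℝ → ℝ) (hr : ∀ t, HasDerivAt r (r' t) t)
    (hrpos : ∀ t, 0 ≤ r t)
    (ψ ψ' : ℝ → EuclideanSpace ℂ (Fin n))
    (hψ : ∀ t, HasDerivAt ψ (ψ' t) t)
    (hψnorm : ∀ t, ‖ψ t‖ = 1)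
    (hψorth : ∀ t, inner ℂ (ψ t) (ψ' t) = (0 : ℂ))
    (heig : ∀ t, Matrix.toEuclideanLin (ρ t) (ψ t) = (r t : ℂ) • ψ t)
    (t : ℝ) :
    r' t ≥ -(∑ α, ‖h α‖ ^ 2) * r t :=
  stmt0_general H h ρ hρ hρode r r' hr hrpos ψ ψ' hψ hψnorm hψorth heig t
end

section
/- An orthogonal projector P is conserved by a Lindblad evolution (i.e. Tr[P ρ(t)] is constant in time for all initial density matrices ρ) if and only if P commutes with the Hamiltonian H and with every transition operator h_α. -/
/-!
Conservation of `Tr[P ρ(t)]` for all states is equivalent to `D†(P) = 0`, where `D†` is the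
Heisenberg-picture generator: one direction differentiates at `t = 0` and tests on pure states,
the other integrates. Compressing `D†(P) = 0` by `P` and by `Q = 1 - P` gives
`∑ (Q h P)ᴴ (Q h P) = 0` and `∑ (P h Q)ᴴ (P h Q) = 0`, so every `h α` leaves the ranges of both `P`
and `Q` invariant, i.e. commutes with `P`; what is left of `D†(P)` is `-i [P, H]`.
-/

open Matrix
open scoped Matrix.Norms.L2Operator ComplexOrder

namespace Matrix

variable {m : Type*} [Fintype m]

theorem eq_zero_of_forall_star_dotProduct_mulVec_eq_zero {M : Matrix m m ℂ}
    (hM : ∀ v, star v ⬝ᵥ M *ᵥ v = 0) : M = 0 := by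
  classical
  suffices Mᴴ = 0 by simpa using congrArg conjTranspose this
  refine (LinearEquiv.map_eq_zero_iff toEuclideanLin).mp <|
    (inner_map_self_eq_zero _).mp fun x => ?_
  rw [EuclideanSpace.inner_eq_star_dotProduct, ofLp_toLpLin, toLin'_apply, star_mulVec,
    conjTranspose_conjTranspose, dotProduct_comm, ← dotProduct_mulVec]
  exact hM _

theorem eq_zero_of_forall_trace_mul_density_eq_zero {M : Matrix m m ℂ}
    (hM : ∀ ρ : Matrix m m ℂ, ρ.PosSemidef → ρ.trace = 1 → (M * ρ).trace = 0) : M = 0 := by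
  refine eq_zero_of_forall_star_dotProduct_mulVec_eq_zero fun v => ?_
  obtain rfl | hv := eq_or_ne v 0
  · simp
  have hc : star v ⬝ᵥ v ≠ 0 := fun h => hv (dotProduct_star_self_eq_zero.mp h)
  have hρ := hM ((star v ⬝ᵥ v)⁻¹ • vecMulVec v (star v))
    ((posSemidef_vecMulVec_self_star v).smul (inv_nonneg.mpr (dotProduct_star_self_nonneg v)))
    (by rw [trace_smul, trace_vecMulVec, dotProduct_comm v, smul_eq_mul, inv_mul_cancel₀ hc])
  rwa [Matrix.mul_smul, trace_smul, mul_vecMulVec, trace_vecMulVec, dotProduct_comm (M *ᵥ v),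
    smul_eq_mul, mul_eq_zero, or_iff_right (inv_ne_zero hc)] at hρ

open scoped MatrixOrder in
theorem eq_zero_of_sum_conjTranspose_mul_self_eq_zero {ι : Type*} [Fintype ι]
    {A : ι → Matrix m m ℂ} (hA : ∑ α, (A α)ᴴ * A α = 0) (α : ι) : A α = 0 :=
  conjTranspose_mul_self_eq_zero.mp <| (Finset.sum_eq_zero_iff_of_nonneg fun β _ =>
    (posSemidef_conjTranspose_mul_self (A β)).nonneg).mp hA α (Finset.mem_univ α)

end Matrix

theorem HasDerivAt.trace_mul {m : Type*} [Fintype m] [DecidableEq m] (P : Matrix m m ℂ)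
    {f : ℝ → Matrix m m ℂ} {f' : Matrix m m ℂ} {t : ℝ} (hf : HasDerivAt f f' t) :
    HasDerivAt (fun s => (P * f s).trace) (P * f').trace t :=
  (LinearMap.toContinuousLinearMap (((traceLinearMap m ℂ ℂ).comp
    (LinearMap.mulLeft ℂ P)).restrictScalars ℝ)).hasFDerivAt.comp_hasDerivAt t hf

noncomputable def lindbladAdjoint {m ι : Type*} [Fintype m] [Fintype ι]
    (H : Matrix m m ℂ) (h : ι → Matrix m m ℂ) (P : Matrix m m ℂ) : Matrix m m ℂ :=
  -Complex.I • (P * H - H * P) +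
    ∑ α, ((h α)ᴴ * P * h α - (1/2 : ℂ) • ((h α)ᴴ * h α * P + P * ((h α)ᴴ * h α)))

theorem trace_mul_lindblad {n : ℕ} {ι : Type*} [Fintype ι]
    (H : Matrix (Fin n) (Fin n) ℂ) (h : ι → Matrix (Fin n) (Fin n) ℂ)
    (P ρ : Matrix (Fin n) (Fin n) ℂ) :
    (P * lindblad H h ρ).trace = (lindbladAdjoint H h P * ρ).trace := by
  have cycle₂ : ∀ A B : Matrix (Fin n) (Fin n) ℂ, (A * ρ * B).trace = (B * A * ρ).trace :=
    fun A B => by rw [trace_mul_comm, mul_assoc]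
  have cycle₃ : ∀ A B C : Matrix (Fin n) (Fin n) ℂ,
      (A * ρ * B * C).trace = (B * C * A * ρ).trace :=
    fun A B C => by rw [mul_assoc (A * ρ), trace_mul_comm, ← mul_assoc]
  simp only [lindblad, lindbladAdjoint, Matrix.mul_add, Matrix.add_mul, Matrix.mul_sub,
    Matrix.sub_mul, Matrix.mul_smul, Matrix.smul_mul, Finset.mul_sum, Finset.sum_mul, trace_add,
    trace_sub, trace_smul, trace_sum, ← mul_assoc, cycle₂, cycle₃]
  exact congrArg _ (Finset.sum_congr rfl fun _ _ => by ring)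

section lindbladAdjoint

variable {m ι : Type*} [Fintype m] [Fintype ι]
  (H : Matrix m m ℂ) (h : ι → Matrix m m ℂ) {P : Matrix m m ℂ}

theorem lindbladAdjoint_eq_of_commute_jump (hPh : Pᴴ = P) (hhP : ∀ α, h α * P = P * h α) :
    lindbladAdjoint H h P = -Complex.I • (P * H - H * P) := by
  have hdissipator : ∀ α, (h α)ᴴ * P * h α
      - (1/2 : ℂ) • ((h α)ᴴ * h α * P + P * ((h α)ᴴ * h α)) = 0 := fun α => by
    have hhP' : (h α)ᴴ * P = P * (h α)ᴴ := by
      simpa [hPh] using (congrArg conjTranspose (hhP α)).symm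
    have e1 : (h α)ᴴ * P * h α = (h α)ᴴ * h α * P := by rw [mul_assoc, ← hhP, mul_assoc]
    have e2 : P * ((h α)ᴴ * h α) = (h α)ᴴ * h α * P := by rw [← mul_assoc, ← hhP', e1]
    rw [e1, e2]
    module
  simp only [lindbladAdjoint, hdissipator, Finset.sum_const_zero, add_zero]

variable [DecidableEq m]

theorem mul_lindbladAdjoint_mul_self (hP : P * P = P) (hPh : Pᴴ = P) :
    P * lindbladAdjoint H h P * P = -∑ α, ((1 - P) * h α * P)ᴴ * ((1 - P) * h α * P) := by
  have hP' : ∀ X : Matrix m m ℂ, P * (P * X) = P * X := fun X => by rw [← mul_assoc, hP]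
  simp only [lindbladAdjoint, Matrix.add_mul, Matrix.mul_add, Matrix.sub_mul, Matrix.mul_sub,
    Matrix.smul_mul, Matrix.mul_smul, Finset.mul_sum, Finset.sum_mul, conjTranspose_mul,
    conjTranspose_sub, hPh, Matrix.one_mul, ← Finset.sum_neg_distrib, mul_assoc, hP', hP,
    sub_self, smul_zero, zero_add]
  exact Finset.sum_congr rfl fun α _ => by module

theorem compl_mul_lindbladAdjoint_mul_compl (hP : P * P = P) (hPh : Pᴴ = P) :
    (1 - P) * lindbladAdjoint H h P * (1 - P)
      = ∑ α, (P * h α * (1 - P))ᴴ * (P * h α * (1 - P)) := by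
  have hP' : ∀ X : Matrix m m ℂ, P * (P * X) = P * X := fun X => by rw [← mul_assoc, hP]
  simp only [lindbladAdjoint, Matrix.add_mul, Matrix.mul_add, Matrix.sub_mul, Matrix.mul_sub,
    Matrix.smul_mul, Matrix.mul_smul, Finset.mul_sum, Finset.sum_mul, conjTranspose_mul,
    conjTranspose_sub, hPh, Matrix.one_mul, Matrix.mul_one, mul_assoc, hP', hP, sub_self,
    zero_mul, add_zero, add_sub_add_left_eq_sub, ← Finset.sum_sub_distrib]
  exact Finset.sum_congr rfl fun α _ => by module

theorem commute_of_lindbladAdjoint_eq_zero (hP : P * P = P) (hPh : Pᴴ = P)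
    (hL : lindbladAdjoint H h P = 0) : H * P = P * H ∧ ∀ α, h α * P = P * h α := by
  have hleak : ∀ α, (1 - P) * h α * P = 0 := eq_zero_of_sum_conjTranspose_mul_self_eq_zero <|
    neg_eq_zero.mp <| by rw [← mul_lindbladAdjoint_mul_self H h hP hPh, hL, mul_zero, zero_mul]
  have hgain : ∀ α, P * h α * (1 - P) = 0 := eq_zero_of_sum_conjTranspose_mul_self_eq_zero <| by
    rw [← compl_mul_lindbladAdjoint_mul_compl H h hP hPh, hL, mul_zero, zero_mul]
  have hhP : ∀ α, h α * P = P * h α := fun α => by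
    have h1 := hleak α
    have h2 := hgain α
    simp only [Matrix.sub_mul, Matrix.mul_sub, Matrix.one_mul, Matrix.mul_one, sub_eq_zero]
      at h1 h2
    exact h1.trans h2.symm
  refine ⟨?_, hhP⟩
  rw [lindbladAdjoint_eq_of_commute_jump H h hPh hhP, smul_eq_zero, neg_eq_zero, sub_eq_zero,
    or_iff_right Complex.I_ne_zero] at hL
  exact hL.symm

end lindbladAdjoint

section evolution

variable {n : ℕ} {ι : Type*} [Fintype ι] {H : Matrix (Fin n) (Fin n) ℂ}
  {h : ι → Matrix (Fin n) (Fin n) ℂ}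
  {T : ℝ → Matrix (Fin n) (Fin n) ℂ →ₗ[ℂ] Matrix (Fin n) (Fin n) ℂ} {P : Matrix (Fin n) (Fin n) ℂ}

theorem trace_mul_lindblad_eq_zero_of_conserved (hT0 : T 0 = LinearMap.id)
    (hTderiv : ∀ ρ t, HasDerivAt (fun s => T s ρ) (lindblad H h (T t ρ)) t)
    {ρ : Matrix (Fin n) (Fin n) ℂ} (hρ : ∀ t ≥ (0 : ℝ), (P * T t ρ).trace = (P * ρ).trace) :
    (P * lindblad H h ρ).trace = 0 := by
  have hderiv := ((hTderiv ρ 0).trace_mul P).hasDerivWithinAt (s := Set.Ici 0)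
  rw [hT0, LinearMap.id_apply] at hderiv
  have hconst : HasDerivWithinAt (fun s => (P * T s ρ).trace) 0 (Set.Ici 0) 0 :=
    (hasDerivWithinAt_const 0 _ _).congr (fun s hs => hρ s hs) (hρ 0 le_rfl)
  exact (uniqueDiffOn_Ici 0 0 Set.self_mem_Ici).eq_deriv _ hderiv hconst

theorem trace_mul_evolution_eq_of_lindbladAdjoint_eq_zero (hT0 : T 0 = LinearMap.id)
    (hTderiv : ∀ ρ t, HasDerivAt (fun s => T s ρ) (lindblad H h (T t ρ)) t)
    (hL : lindbladAdjoint H h P = 0) (ρ : Matrix (Fin n) (Fin n) ℂ) (t : ℝ) :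
    (P * T t ρ).trace = (P * ρ).trace := by
  have hderiv : ∀ s, HasDerivAt (fun s => (P * T s ρ).trace) 0 s := fun s => by
    simpa only [trace_mul_lindblad, hL, zero_mul, trace_zero] using (hTderiv ρ s).trace_mul P
  simpa [hT0] using is_const_of_deriv_eq_zero (fun s => (hderiv s).differentiableAt)
    (fun s => (hderiv s).deriv) t 0

end evolution

theorem stmt3_general {n : ℕ} {ι : Type*} [Fintype ι]
    (H : Matrix (Fin n) (Fin n) ℂ)
    (h : ι → Matrix (Fin n) (Fin n) ℂ)
    (T : ℝ → Matrix (Fin n) (Fin n) ℂ →ₗ[ℂ] Matrix (Fin n) (Fin n) ℂ)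
    (hT0 : T 0 = LinearMap.id)
    (hTderiv : ∀ (ρ : Matrix (Fin n) (Fin n) ℂ) (t : ℝ),
      HasDerivAt (fun s => T s ρ) (lindblad H h (T t ρ)) t)
    (P : Matrix (Fin n) (Fin n) ℂ) (hP : P * P = P) (hPh : Pᴴ = P) :
    (∀ ρ : Matrix (Fin n) (Fin n) ℂ, ρ.PosSemidef → ρ.trace = 1 →
        ∀ t ≥ (0:ℝ), (P * T t ρ).trace = (P * ρ).trace) ↔
      (H * P = P * H ∧ ∀ α, h α * P = P * h α) := by
  constructor
  · intro hconserved
    refine commute_of_lindbladAdjoint_eq_zero H h hP hPh <|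
      eq_zero_of_forall_trace_mul_density_eq_zero fun ρ hρ hρtr => ?_
    rw [← trace_mul_lindblad]
    exact trace_mul_lindblad_eq_zero_of_conserved hT0 hTderiv (hconserved ρ hρ hρtr)
  · rintro ⟨hHP, hhP⟩ ρ - - t -
    have hL : lindbladAdjoint H h P = 0 := by
      rw [lindbladAdjoint_eq_of_commute_jump H h hPh hhP, hHP, sub_self, smul_zero]
    exact trace_mul_evolution_eq_of_lindbladAdjoint_eq_zero hT0 hTderiv hL ρ t

/-- An orthogonal projector `P` is conserved by the Lindblad evolution `T` iff it
commutes with the Hamiltonian and with every transition operator. -/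
theorem stmt3 {n : ℕ} {ι : Type*} [Fintype ι]
    (H : Matrix (Fin n) (Fin n) ℂ) (hH : H.IsHermitian)
    (h : ι → Matrix (Fin n) (Fin n) ℂ)
    (T : ℝ → Matrix (Fin n) (Fin n) ℂ →ₗ[ℂ] Matrix (Fin n) (Fin n) ℂ)
    (hT0 : T 0 = LinearMap.id)
    (hTderiv : ∀ (ρ : Matrix (Fin n) (Fin n) ℂ) (t : ℝ),
      HasDerivAt (fun s => T s ρ) (lindblad H h (T t ρ)) t)
    (P : Matrix (Fin n) (Fin n) ℂ) (hP : P * P = P) (hPh : Pᴴ = P) :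
    (∀ ρ : Matrix (Fin n) (Fin n) ℂ, ρ.PosSemidef → ρ.trace = 1 →
        ∀ t ≥ (0:ℝ), (P * T t ρ).trace = (P * ρ).trace) ↔
      (H * P = P * H ∧ ∀ α, h α * P = P * h α) :=
  stmt3_general H h T hT0 hTderiv P hP hPh
end

section
/- A subspace PH is lazy (no first-order flow out of it: for all ρ = PρP, d/dt Tr[P ρ(t) P] = 0 at t = 0) if and only if h_α P = P h_α P for every transition operator h_α. -/
/-!
For `ρ` supported on the range of `P`, cyclicity of the trace gives
`Tr[P D(ρ) P] = -∑ α, Tr[B_α ρ B_αᴴ]` with `B_α = (1 - P) h_α P`: the Hamiltonian part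
cancels and each jump term leaves exactly the flow out of `P ℋ`. So `B_α = 0`, i.e.
`h_α P = P h_α P`, makes `P ℋ` lazy; conversely, testing laziness on the maximally mixed
state `P / Tr P` gives `∑ α, Tr[B_α B_αᴴ] = 0`, whence every `B_α` vanishes.
-/

open Matrix
open scoped Matrix.Norms.L2Operator ComplexOrder

theorem one_sub_mul_mul_eq_zero_iff {R : Type*} [Ring R] {p a : R} :
    (1 - p) * a * p = 0 ↔ a * p = p * (a * p) := by
  rw [sub_mul, one_mul, sub_mul, sub_eq_zero, mul_assoc]

theorem HasDerivAt.trace_mul_mul {m : Type*} [Fintype m] [DecidableEq m]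
    {f : ℝ → Matrix m m ℂ} {f' : Matrix m m ℂ} {t : ℝ} (hf : HasDerivAt f f' t)
    (A B : Matrix m m ℂ) :
    HasDerivAt (fun s => (A * f s * B).trace) (A * f' * B).trace t :=
  (LinearMap.toContinuousLinearMap (traceLinearMap m ℂ ℂ) |>.restrictScalars ℝ).hasFDerivAt
    |>.comp_hasDerivAt t ((hf.const_mul A).mul_const B)

section Compression

variable {m R : Type*} [Fintype m] [CommRing R] {P ρ : Matrix m m R}

theorem IsIdempotentElem.trace_mul_mul (hP : IsIdempotentElem P) (X : Matrix m m R) :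
    (P * X * P).trace = (X * P).trace := by
  rw [trace_mul_cycle, hP.eq, trace_mul_comm]

theorem trace_compl_mul_mul_conjTranspose [DecidableEq m] [StarRing R] (hP : IsIdempotentElem P)
    (hPh : Pᴴ = P) (hl : P * ρ = ρ) (hr : ρ * P = ρ) (A : Matrix m m R) :
    ((1 - P) * A * P * ρ * ((1 - P) * A * P)ᴴ).trace =
      (Aᴴ * A * ρ).trace - (P * (A * ρ * Aᴴ) * P).trace := by
  have hsandwich :
      (1 - P) * A * P * ρ * ((1 - P) * A * P)ᴴ = (1 - P) * (A * ρ * Aᴴ) * (1 - P) := by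
    simp only [conjTranspose_mul, conjTranspose_sub, conjTranspose_one, hPh, ← mul_assoc]
    rw [mul_assoc _ P ρ, hl, mul_assoc _ ρ P, hr]
  rw [hsandwich, hP.one_sub.trace_mul_mul, hP.trace_mul_mul, mul_sub, mul_one, trace_sub,
    trace_mul_cycle, mul_assoc]

end Compression

theorem trace_mul_lindblad_mul {n : ℕ} {ι : Type*} [Fintype ι]
    {P ρ : Matrix (Fin n) (Fin n) ℂ}
    (hP : IsIdempotentElem P) (hPh : Pᴴ = P) (hl : P * ρ = ρ) (hr : ρ * P = ρ)
    (H : Matrix (Fin n) (Fin n) ℂ) (h : ι → Matrix (Fin n) (Fin n) ℂ) :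
    (P * lindblad H h ρ * P).trace =
      -∑ α, ((1 - P) * h α * P * ρ * ((1 - P) * h α * P)ᴴ).trace := by
  have hleft (X : Matrix (Fin n) (Fin n) ℂ) : (P * (X * ρ) * P).trace = (X * ρ).trace := by
    rw [hP.trace_mul_mul, mul_assoc, hr]
  have hright (X : Matrix (Fin n) (Fin n) ℂ) : (P * (ρ * X) * P).trace = (X * ρ).trace := by
    rw [hP.trace_mul_mul, trace_mul_cycle, hl, trace_mul_comm]
  have hcoherent : (P * (-Complex.I • (H * ρ - ρ * H)) * P).trace = 0 := by
    rw [Matrix.mul_smul, Matrix.smul_mul, trace_smul, mul_sub, sub_mul, trace_sub, hleft, hright,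
      sub_self, smul_zero]
  have hdissipative (A : Matrix (Fin n) (Fin n) ℂ) :
      (P * (A * ρ * Aᴴ - (1/2 : ℂ) • (Aᴴ * A * ρ + ρ * (Aᴴ * A))) * P).trace =
        -((1 - P) * A * P * ρ * ((1 - P) * A * P)ᴴ).trace := by
    rw [trace_compl_mul_mul_conjTranspose hP hPh hl hr, mul_sub, sub_mul, trace_sub,
      Matrix.mul_smul, Matrix.smul_mul, trace_smul, mul_add, add_mul, trace_add, hleft, hright,
      smul_eq_mul]
    ring
  rw [lindblad, mul_add, add_mul, trace_add, hcoherent, zero_add, Finset.mul_sum, Finset.sum_mul,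
    trace_sum, ← Finset.sum_neg_distrib]
  exact Finset.sum_congr rfl fun α _ => hdissipative (h α)

section Projector

variable {m : Type*} [Fintype m] {P : Matrix m m ℂ}
  (hP : IsIdempotentElem P) (hPh : Pᴴ = P)
include hP hPh

theorem IsIdempotentElem.self_eq_conjTranspose_mul_self : P = Pᴴ * P := by
  rw [hPh, hP.eq]

theorem IsIdempotentElem.posSemidef_of_conjTranspose_eq : P.PosSemidef :=
  hP.self_eq_conjTranspose_mul_self hPh ▸ posSemidef_conjTranspose_mul_self P

theorem IsIdempotentElem.eq_zero_of_trace_eq_zero_of_conjTranspose_eq (htr : P.trace = 0) :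
    P = 0 := by
  rwa [hP.self_eq_conjTranspose_mul_self hPh, trace_conjTranspose_mul_self_eq_zero_iff] at htr

end Projector

theorem one_sub_mul_mul_eq_zero_of_trace_mul_lindblad_mul_eq_zero {n : ℕ} {ι : Type*}
    [Fintype ι] {P : Matrix (Fin n) (Fin n) ℂ}
    (hP : IsIdempotentElem P) (hPh : Pᴴ = P)
    (H : Matrix (Fin n) (Fin n) ℂ) (h : ι → Matrix (Fin n) (Fin n) ℂ)
    (hlazy : ∀ ρ : Matrix (Fin n) (Fin n) ℂ, ρ.PosSemidef → ρ.trace = 1 →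
      ρ = P * ρ * P → (P * lindblad H h ρ * P).trace = 0) (α : ι) :
    (1 - P) * h α * P = 0 := by
  by_cases htr : P.trace = 0
  · simp [hP.eq_zero_of_trace_eq_zero_of_conjTranspose_eq hPh htr]
  set ρ := P.trace⁻¹ • P
  have hl : P * ρ = ρ := by rw [Matrix.mul_smul, hP.eq]
  have hr : ρ * P = ρ := by rw [Matrix.smul_mul, hP.eq]
  have hpsd : ρ.PosSemidef :=
    (hP.posSemidef_of_conjTranspose_eq hPh).smul
      (inv_nonneg_of_nonneg (hP.posSemidef_of_conjTranspose_eq hPh).trace_nonneg)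
  have hρtr : ρ.trace = 1 := by rw [trace_smul, smul_eq_mul, inv_mul_cancel₀ htr]
  have hcompress (β : ι) : (1 - P) * h β * P * ρ * ((1 - P) * h β * P)ᴴ =
      P.trace⁻¹ • ((1 - P) * h β * P * ((1 - P) * h β * P)ᴴ) := by
    rw [Matrix.mul_smul, Matrix.smul_mul, mul_assoc _ P P, hP.eq]
  have hsum := hlazy ρ hpsd hρtr (by rw [mul_assoc, hr, hl])
  simp only [trace_mul_lindblad_mul hP hPh hl hr, neg_eq_zero, hcompress, trace_smul,
    ← Finset.smul_sum, smul_eq_zero, inv_eq_zero, htr, false_or] at hsum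
  rw [Finset.sum_eq_zero_iff_of_nonneg
    fun β _ => (posSemidef_self_mul_conjTranspose _).trace_nonneg] at hsum
  exact trace_mul_conjTranspose_self_eq_zero_iff.mp (hsum α (Finset.mem_univ α))

theorem stmt4_general {n : ℕ} {ι : Type*} [Fintype ι]
    (H : Matrix (Fin n) (Fin n) ℂ)
    (h : ι → Matrix (Fin n) (Fin n) ℂ)
    (T : ℝ → Matrix (Fin n) (Fin n) ℂ →ₗ[ℂ] Matrix (Fin n) (Fin n) ℂ)
    (hT0 : T 0 = LinearMap.id)
    (hTderiv : ∀ (ρ : Matrix (Fin n) (Fin n) ℂ) (t : ℝ),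
      HasDerivAt (fun s => T s ρ) (lindblad H h (T t ρ)) t)
    (P : Matrix (Fin n) (Fin n) ℂ) (hP : P * P = P) (hPh : Pᴴ = P) :
    (∀ ρ : Matrix (Fin n) (Fin n) ℂ, ρ.PosSemidef → ρ.trace = 1 → ρ = P * ρ * P →
        HasDerivAt (fun t => (P * T t ρ * P).trace) (0 : ℂ) 0) ↔
      ∀ α, h α * P = P * (h α * P) := by
  have hderiv (ρ : Matrix (Fin n) (Fin n) ℂ) :
      HasDerivAt (fun t => (P * T t ρ * P).trace) (P * lindblad H h ρ * P).trace 0 := by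
    simpa [hT0] using (hTderiv ρ 0).trace_mul_mul P P
  simp only [← one_sub_mul_mul_eq_zero_iff]
  constructor
  · intro hlazy
    exact one_sub_mul_mul_eq_zero_of_trace_mul_lindblad_mul_eq_zero hP hPh H h
      fun ρ hpsd htr hρ => (hderiv ρ).unique (hlazy ρ hpsd htr hρ)
  · intro hB ρ _ _ hρ
    have hl : P * ρ = ρ := by rw [hρ, ← mul_assoc, ← mul_assoc, hP]
    have hr : ρ * P = ρ := by rw [hρ, mul_assoc, hP]
    simpa [trace_mul_lindblad_mul hP hPh hl hr, hB] using hderiv ρ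

/-- `P ℋ` is a lazy subspace (no first-order flow out) iff `h_α P = P h_α P` for all `α`. -/
theorem stmt4 {n : ℕ} {ι : Type*} [Fintype ι]
    (H : Matrix (Fin n) (Fin n) ℂ) (hH : H.IsHermitian)
    (h : ι → Matrix (Fin n) (Fin n) ℂ)
    (T : ℝ → Matrix (Fin n) (Fin n) ℂ →ₗ[ℂ] Matrix (Fin n) (Fin n) ℂ)
    (hT0 : T 0 = LinearMap.id)
    (hTderiv : ∀ (ρ : Matrix (Fin n) (Fin n) ℂ) (t : ℝ),
      HasDerivAt (fun s => T s ρ) (lindblad H h (T t ρ)) t)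
    (P : Matrix (Fin n) (Fin n) ℂ) (hP : P * P = P) (hPh : Pᴴ = P) :
    (∀ ρ : Matrix (Fin n) (Fin n) ℂ, ρ.PosSemidef → ρ.trace = 1 → ρ = P * ρ * P →
        HasDerivAt (fun t => (P * T t ρ * P).trace) (0 : ℂ) 0) ↔
      ∀ α, h α * P = P * (h α * P) :=
  stmt4_general H h T hT0 hTderiv P hP hPh
end

section
/- A subspace PH is collecting (T^t(PρP) = P T^t(PρP) P for all t > 0 and all states ρ) if and only if it is lazy (h_α P = P h_α P for all α) and additionally P(iH − ½ Σ_α h_α†h_α)P^⊥ = 0. -/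
open Matrix
open scoped Matrix.Norms.L2Operator ComplexOrder

/-!
Write `Q = 1 - P` and `C = iH - ½ ∑ h_α† h_α`, so that `D X = ∑ h_α X h_α† + X C + C† X`.
If `T` keeps the corner `P M_n P` invariant, then so does its generator: the flow started at the
corner `P` of the maximally mixed state stays in it, hence so does its derivative `D P` at `t = 0`.
The block `Q (D P) Q = ∑ (Q h_α P)(Q h_α P)†` then vanishes, which is laziness, after which
the block `P (D P) Q` reduces to `P C Q`.
Conversely, these two conditions make the corner `D`-invariant. Then the off-corner part
`g t = p (T t X)`, `p W = W - P W P`, of a solution started in the corner solves the linear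
equation `g' = (p ∘ D) g` with `g 0 = 0`, so `g = 0` by uniqueness.
-/

section LinearFlow

variable {E : Type*} [NormedAddCommGroup E] [NormedSpace ℝ E]

theorem HasDerivAt.eq_zero_of_eqOn_Ici {f : ℝ → E} {f' : E} {a : ℝ} (hf : HasDerivAt f f' a)
    (h : Set.EqOn f 0 (Set.Ici a)) : f' = 0 :=
  (uniqueDiffWithinAt_Ici a).eq_deriv _ hf.hasDerivWithinAt <|
    (hasDerivWithinAt_const a _ 0).congr (fun _ ht => h ht) (h Set.self_mem_Ici)

theorem IsIdempotentElem.apply_eq_zero_of_hasDerivAt_of_ker_invariant {p L : E →L[ℝ] E}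
    (hp : IsIdempotentElem p) (hL : ∀ x, p x = 0 → p (L x) = 0) {f : ℝ → E}
    (hf : ∀ t, HasDerivAt f (L (f t)) t)
    (h0 : p (f 0) = 0) {t : ℝ} (ht : 0 ≤ t) : p (f t) = 0 := by
  have hg : ∀ s, HasDerivAt (fun s => p (f s)) ((p ∘L L) (p (f s))) s := by
    intro s
    have hker : p (f s - p (f s)) = 0 := by
      rw [map_sub, sub_eq_zero]
      exact (DFunLike.congr_fun hp.eq (f s)).symm
    have hsplit := hL _ hker
    rw [map_sub, map_sub, sub_eq_zero] at hsplit
    rw [ContinuousLinearMap.comp_apply, ← hsplit]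
    exact p.hasFDerivAt.comp_hasDerivAt s (hf s)
  -- both `p ∘ f` and `0` solve the linear equation `g' = (p ∘ L) g`
  exact ODE_solution_unique (v := fun _ => p ∘L L) (g := fun _ => 0) (b := t)
    (fun _ => (p ∘L L).lipschitz) (fun s _ => (hg s).continuousAt.continuousWithinAt)
    (fun s _ => (hg s).hasDerivWithinAt) continuousOn_const
    (fun s _ => by simpa using hasDerivWithinAt_const s _ (0 : E)) h0 ⟨ht, le_rfl⟩

end LinearFlow

open scoped MatrixOrder in
theorem Matrix.eq_zero_of_sum_mul_conjTranspose_eq_zero {ι m k 𝕜 : Type*} [Fintype ι] [Fintype m]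
    [Fintype k] [RCLike 𝕜] {A : ι → Matrix m k 𝕜} (h : ∑ α, A α * (A α)ᴴ = 0) (α : ι) :
    A α = 0 :=
  self_mul_conjTranspose_eq_zero.mp <| (Finset.sum_eq_zero_iff_of_nonneg fun β _ =>
    (posSemidef_self_mul_conjTranspose (A β)).nonneg).mp h α (Finset.mem_univ α)

theorem IsIdempotentElem.mul_mul_eq_self_iff {R : Type*} [Ring R] {p x : R}
    (hp : IsIdempotentElem p) : p * x * p = x ↔ (1 - p) * x = 0 ∧ x * (1 - p) = 0 := by
  simp only [sub_mul, mul_sub, one_mul, mul_one, sub_eq_zero]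
  constructor
  · intro h
    rw [← h]
    exact ⟨by rw [← mul_assoc, ← mul_assoc, hp.eq], (hp.mul_mul_self _).symm⟩
  · rintro ⟨hl, hr⟩
    rw [← hl, ← hr]

section Lindblad

variable {n : ℕ} {ι : Type*}

def IsCollecting (T : ℝ → Matrix (Fin n) (Fin n) ℂ →ₗ[ℂ] Matrix (Fin n) (Fin n) ℂ)
    (P : Matrix (Fin n) (Fin n) ℂ) : Prop :=
  ∀ t > (0:ℝ), ∀ ρ : Matrix (Fin n) (Fin n) ℂ, ρ.PosSemidef → ρ.trace = 1 →
    T t (P * ρ * P) = P * T t (P * ρ * P) * P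

def IsLazy (h : ι → Matrix (Fin n) (Fin n) ℂ) (P : Matrix (Fin n) (Fin n) ℂ) : Prop :=
  ∀ α, h α * P = P * (h α * P)

noncomputable def lindbladDrift [Fintype ι] (H : Matrix (Fin n) (Fin n) ℂ)
    (h : ι → Matrix (Fin n) (Fin n) ℂ) : Matrix (Fin n) (Fin n) ℂ :=
  Complex.I • H - (1/2 : ℂ) • ∑ α, (h α)ᴴ * h α

noncomputable def lindbladLinearMap [Fintype ι] (H : Matrix (Fin n) (Fin n) ℂ)
    (h : ι → Matrix (Fin n) (Fin n) ℂ) :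
    Matrix (Fin n) (Fin n) ℂ →ₗ[ℂ] Matrix (Fin n) (Fin n) ℂ where
  toFun := lindblad H h
  map_add' X Y := by
    simp only [lindblad, mul_add, add_mul, smul_add, Finset.sum_add_distrib,
      Finset.sum_sub_distrib, ← Finset.smul_sum]
    module
  map_smul' c X := by
    simp only [lindblad, mul_smul_comm, smul_mul_assoc, Finset.sum_sub_distrib,
      ← Finset.smul_sum, ← smul_sub, ← smul_add, RingHom.id_apply, smul_comm _ c]

noncomputable def lindbladCLM [Fintype ι] (H : Matrix (Fin n) (Fin n) ℂ)
    (h : ι → Matrix (Fin n) (Fin n) ℂ) : Matrix (Fin n) (Fin n) ℂ →L[ℝ] Matrix (Fin n) (Fin n) ℂ :=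
  LinearMap.toContinuousLinearMap ((lindbladLinearMap H h).restrictScalars ℝ)

noncomputable def cornerCompl (P : Matrix (Fin n) (Fin n) ℂ) :
    Matrix (Fin n) (Fin n) ℂ →L[ℝ] Matrix (Fin n) (Fin n) ℂ :=
  .id ℝ _ - ContinuousLinearMap.mulLeftRight ℝ _ P P

variable {H : Matrix (Fin n) (Fin n) ℂ} {h : ι → Matrix (Fin n) (Fin n) ℂ}
  {P : Matrix (Fin n) (Fin n) ℂ}

lemma cornerCompl_apply (W : Matrix (Fin n) (Fin n) ℂ) : cornerCompl P W = W - P * W * P :=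
  rfl

lemma cornerCompl_eq_zero_iff {W : Matrix (Fin n) (Fin n) ℂ} :
    cornerCompl P W = 0 ↔ P * W * P = W := by
  rw [cornerCompl_apply, sub_eq_zero, eq_comm]

lemma isIdempotentElem_cornerCompl (hP : IsIdempotentElem P) :
    IsIdempotentElem (cornerCompl P) := by
  ext1 W
  change cornerCompl P (cornerCompl P W) = cornerCompl P W
  simp only [cornerCompl_apply, mul_sub, sub_mul, ← mul_assoc, hP.eq]
  simp only [mul_assoc, hP.eq]
  abel

lemma isLazy_iff : IsLazy h P ↔ ∀ α, (1 - P) * h α * P = 0 := by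
  simp only [IsLazy, sub_mul, one_mul, mul_assoc, sub_eq_zero]

lemma IsLazy.mul_conjTranspose_mul_compl (hlazy : IsLazy h P) (hP : IsStarProjection P) (α : ι) :
    P * ((h α)ᴴ * (1 - P)) = 0 := by
  have hPh : Pᴴ = P := hP.isSelfAdjoint
  simpa [conjTranspose_mul, hPh, mul_assoc] using congrArg conjTranspose (isLazy_iff.mp hlazy α)

variable [Fintype ι]

lemma lindblad_eq (hH : H.IsHermitian) (X : Matrix (Fin n) (Fin n) ℂ) :
    lindblad H h X =
      ∑ α, h α * X * (h α)ᴴ + X * lindbladDrift H h + (lindbladDrift H h)ᴴ * X := by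
  simp only [lindblad, lindbladDrift, conjTranspose_sub, conjTranspose_smul, conjTranspose_sum,
    conjTranspose_mul, conjTranspose_conjTranspose, hH.eq, Finset.sum_sub_distrib,
    ← Finset.smul_sum, mul_sub, sub_mul, mul_smul_comm, smul_mul_assoc, Finset.mul_sum,
    Finset.sum_mul, smul_add, Complex.star_def, Complex.conj_I, Finset.sum_add_distrib, map_div₀,
    map_one, map_ofNat]
  module

lemma conjTranspose_lindblad (hH : H.IsHermitian) (X : Matrix (Fin n) (Fin n) ℂ) :
    (lindblad H h X)ᴴ = lindblad H h Xᴴ := by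
  simp only [lindblad_eq hH, conjTranspose_add, conjTranspose_sum, conjTranspose_mul,
    conjTranspose_conjTranspose, mul_assoc]
  abel

lemma compl_mul_lindblad_self_mul_compl (hH : H.IsHermitian) (hP : IsStarProjection P) :
    (1 - P) * lindblad H h P * (1 - P) =
      ∑ α, ((1 - P) * h α * P) * ((1 - P) * h α * P)ᴴ := by
  have hPh : Pᴴ = P := hP.isSelfAdjoint
  have hQh : (1 - P)ᴴ = 1 - P := hP.one_sub.isSelfAdjoint
  have hQP : ∀ X, (1 - P) * (P * X) = 0 := fun X => by
    rw [← mul_assoc, hP.one_sub_mul_self, zero_mul]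
  rw [lindblad_eq hH]
  simp only [mul_add, add_mul, Finset.mul_sum, Finset.sum_mul, conjTranspose_mul, hPh, hQh,
    mul_assoc, hQP, hP.mul_one_sub_self, hP.isIdempotentElem.mul_self_mul, mul_zero, add_zero]

lemma mul_lindblad_self_mul_compl (hH : H.IsHermitian) (hP : IsStarProjection P)
    (hlazy : IsLazy h P) : P * lindblad H h P * (1 - P) = P * lindbladDrift H h * (1 - P) := by
  rw [lindblad_eq hH]
  simp only [mul_add, add_mul, Finset.mul_sum, Finset.sum_mul, mul_assoc,
    hlazy.mul_conjTranspose_mul_compl hP, hP.mul_one_sub_self, hP.isIdempotentElem.mul_self_mul,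
    mul_zero, Finset.sum_const_zero, zero_add, add_zero]

lemma isLazy_and_of_mul_lindblad_mul_eq (hH : H.IsHermitian) (hP : IsStarProjection P)
    (hD : P * lindblad H h P * P = lindblad H h P) :
    IsLazy h P ∧ P * lindbladDrift H h * (1 - P) = 0 := by
  obtain ⟨hl, hr⟩ := hP.isIdempotentElem.mul_mul_eq_self_iff.mp hD
  have hlazy : IsLazy h P := isLazy_iff.mpr <| eq_zero_of_sum_mul_conjTranspose_eq_zero <| by
    rw [← compl_mul_lindblad_self_mul_compl hH hP, hl, zero_mul]
  refine ⟨hlazy, ?_⟩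
  rw [← mul_lindblad_self_mul_compl hH hP hlazy, mul_assoc, hr, mul_zero]

lemma lindblad_mul_compl_eq_zero (hH : H.IsHermitian) (hP : IsStarProjection P)
    (hlazy : IsLazy h P) (hdrift : P * lindbladDrift H h * (1 - P) = 0)
    {X : Matrix (Fin n) (Fin n) ℂ} (hX : X * (1 - P) = 0) : lindblad H h X * (1 - P) = 0 := by
  have hXP : X = X * P := by rwa [mul_sub, mul_one, sub_eq_zero] at hX
  rw [mul_assoc] at hdrift
  rw [lindblad_eq hH]
  simp only [add_mul, Finset.sum_mul, mul_assoc, hX, mul_zero, add_zero]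
  rw [hXP]
  simp only [mul_assoc, hlazy.mul_conjTranspose_mul_compl hP, hdrift, mul_zero,
    Finset.sum_const_zero, add_zero]

lemma mul_lindblad_mul_eq_of_isLazy (hH : H.IsHermitian) (hP : IsStarProjection P)
    (hlazy : IsLazy h P) (hdrift : P * lindbladDrift H h * (1 - P) = 0)
    {X : Matrix (Fin n) (Fin n) ℂ} (hX : P * X * P = X) :
    P * lindblad H h X * P = lindblad H h X := by
  rw [hP.isIdempotentElem.mul_mul_eq_self_iff] at hX ⊢
  refine ⟨?_, lindblad_mul_compl_eq_zero hH hP hlazy hdrift hX.2⟩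
  -- the left block is the adjoint of the right block for `Xᴴ`, since `D` commutes with `ᴴ`
  have hQ : (1 - P)ᴴ = 1 - P := hP.one_sub.isSelfAdjoint
  have hXh : Xᴴ * (1 - P) = 0 := by
    simpa [conjTranspose_mul, hQ] using congrArg conjTranspose hX.1
  simpa [conjTranspose_mul, conjTranspose_lindblad hH, hQ] using
    congrArg conjTranspose (lindblad_mul_compl_eq_zero hH hP hlazy hdrift hXh)

variable {T : ℝ → Matrix (Fin n) (Fin n) ℂ →ₗ[ℂ] Matrix (Fin n) (Fin n) ℂ}

lemma IsCollecting.mul_apply_mul_eq (hcol : IsCollecting T P) (hP : IsIdempotentElem P) {t : ℝ}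
    (ht : 0 < t) : P * T t P * P = T t P := by
  rcases eq_or_ne n 0 with rfl | hn
  · exact Subsingleton.elim _ _
  -- the maximally mixed state `n⁻¹ • 1` has corner `n⁻¹ • P`
  have hρ : ((n : ℂ)⁻¹ • (1 : Matrix (Fin n) (Fin n) ℂ)).PosSemidef :=
    PosSemidef.one.smul (by positivity)
  have htr : ((n : ℂ)⁻¹ • (1 : Matrix (Fin n) (Fin n) ℂ)).trace = 1 := by simp [hn]
  have hmixed := hcol t ht _ hρ htr
  rw [mul_smul_comm, smul_mul_assoc, mul_one, hP.eq, map_smul, mul_smul_comm,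
    smul_mul_assoc] at hmixed
  exact (smul_right_injective _ (by simpa using hn) hmixed).symm

lemma IsCollecting.mul_lindblad_mul_eq (hcol : IsCollecting T P) (hP : IsIdempotentElem P)
    (hT0 : T 0 = LinearMap.id)
    (hTderiv : ∀ ρ t, HasDerivAt (fun s => T s ρ) (lindblad H h (T t ρ)) t) :
    P * lindblad H h P * P = lindblad H h P := by
  rw [← cornerCompl_eq_zero_iff]
  have hd : HasDerivAt (fun s => cornerCompl P (T s P)) (cornerCompl P (lindblad H h P)) 0 := by
    have := (cornerCompl P).hasFDerivAt.comp_hasDerivAt 0 (hTderiv P 0)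
    rwa [hT0, LinearMap.id_apply] at this
  refine hd.eq_zero_of_eqOn_Ici fun t ht => ?_
  rw [Pi.zero_apply, cornerCompl_eq_zero_iff]
  rcases (Set.mem_Ici.mp ht).eq_or_lt with rfl | ht
  · simp [hT0, hP.eq]
  · exact hcol.mul_apply_mul_eq hP ht

lemma isCollecting_of_mul_lindblad_mul_eq (hP : IsIdempotentElem P) (hT0 : T 0 = LinearMap.id)
    (hTderiv : ∀ ρ t, HasDerivAt (fun s => T s ρ) (lindblad H h (T t ρ)) t)
    (hD : ∀ X, P * X * P = X → P * lindblad H h X * P = lindblad H h X) : IsCollecting T P := by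
  intro t ht ρ _ _
  rw [eq_comm, ← cornerCompl_eq_zero_iff]
  refine (isIdempotentElem_cornerCompl hP).apply_eq_zero_of_hasDerivAt_of_ker_invariant
    (L := lindbladCLM H h) (fun X hX => ?_) (fun s => hTderiv _ s) ?_ ht.le
  · rw [cornerCompl_eq_zero_iff] at hX ⊢
    exact hD X hX
  · rw [hT0, cornerCompl_eq_zero_iff]
    simp only [LinearMap.id_apply, mul_assoc, hP.eq, hP.mul_self_mul]

end Lindblad

/-- `P ℋ` is collecting iff it is lazy and `P (iH - ½ ∑ h_α† h_α) P^⊥ = 0`. -/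
theorem stmt5 {n : ℕ} {ι : Type*} [Fintype ι]
    (H : Matrix (Fin n) (Fin n) ℂ) (hH : H.IsHermitian)
    (h : ι → Matrix (Fin n) (Fin n) ℂ)
    (T : ℝ → Matrix (Fin n) (Fin n) ℂ →ₗ[ℂ] Matrix (Fin n) (Fin n) ℂ)
    (hT0 : T 0 = LinearMap.id)
    (hTderiv : ∀ (ρ : Matrix (Fin n) (Fin n) ℂ) (t : ℝ),
      HasDerivAt (fun s => T s ρ) (lindblad H h (T t ρ)) t)
    (P : Matrix (Fin n) (Fin n) ℂ) (hP : P * P = P) (hPh : Pᴴ = P) :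
    (∀ t > (0:ℝ), ∀ ρ : Matrix (Fin n) (Fin n) ℂ, ρ.PosSemidef → ρ.trace = 1 →
        T t (P * ρ * P) = P * T t (P * ρ * P) * P) ↔
      ((∀ α, h α * P = P * (h α * P)) ∧
        P * (Complex.I • H - (1/2 : ℂ) • ∑ α, (h α)ᴴ * h α) * (1 - P) = 0) := by
  have hPproj : IsStarProjection P := ⟨hP, hPh⟩
  change IsCollecting T P ↔ IsLazy h P ∧ P * lindbladDrift H h * (1 - P) = 0
  constructor
  · intro hcol
    exact isLazy_and_of_mul_lindblad_mul_eq hH hPproj (hcol.mul_lindblad_mul_eq hP hT0 hTderiv)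
  · rintro ⟨hlazy, hdrift⟩
    exact isCollecting_of_mul_lindblad_mul_eq hP hT0 hTderiv fun X hX =>
      mul_lindblad_mul_eq_of_isLazy hH hPproj hlazy hdrift hX
end

section
/- If ρ is a stationary state of a Lindblad generator and P is the orthogonal projector onto the range of ρ, then the subspace PH is collecting: h_α P = P h_α P for all α and P(iH − ½ Σ_α h_α†h_α)P^⊥ = 0. -/
/-!
Write `Q = 1 - P` for the projector onto `ker ρ`. Sandwiching `D(ρ) = 0` between `Q` and `Q` kills
every term except `∑ α, (Q h_α) ρ (Q h_α)†`, a sum of positive semidefinite matrices; hence each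
summand vanishes, which forces `Q h_α ρ = 0`, and `Q h_α P = 0` because `ρ` and `P` have the same
range. Once these terms are gone, `Q D(ρ) = -Q (iH + ½ ∑ h_α† h_α) ρ`, so
`Q (iH + ½ ∑ h_α† h_α) P = 0`, whose adjoint is the second claim.
-/

open Matrix
open scoped Matrix.Norms.L2Operator ComplexOrder MatrixOrder

namespace Matrix

variable {l m p q R 𝕜 : Type*} [Fintype m] [Fintype p] [Fintype q] [CommRing R] [RCLike 𝕜]

theorem mul_eq_zero_of_range_le {X : Matrix l m R} {A : Matrix m p R} {B : Matrix m q R}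
    (hBA : LinearMap.range B.mulVecLin ≤ LinearMap.range A.mulVecLin) (hXA : X * A = 0) :
    X * B = 0 := by
  have hA : LinearMap.range A.mulVecLin ≤ LinearMap.ker X.mulVecLin := by
    rw [LinearMap.range_le_ker_iff, ← mulVecLin_mul, hXA, mulVecLin_zero]
  have hXB := LinearMap.range_le_ker_iff.mp (hBA.trans hA)
  rw [← mulVecLin_mul] at hXB
  classical exact toLin'.injective (by rw [toLin'_apply', hXB, map_zero])

theorem mul_eq_self_of_range_le [DecidableEq m] {P : Matrix m m R} {A : Matrix m p R}
    (hP : P * P = P) (hAP : LinearMap.range A.mulVecLin ≤ LinearMap.range P.mulVecLin) :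
    P * A = A := by
  have : (1 - P) * A = 0 := mul_eq_zero_of_range_le hAP (by rw [sub_mul, one_mul, hP, sub_self])
  rwa [Matrix.sub_mul, Matrix.one_mul, sub_eq_zero, eq_comm] at this

theorem PosSemidef.mul_eq_zero_of_mul_mul_conjTranspose_eq_zero [DecidableEq m]
    {A : Matrix m m 𝕜} {B : Matrix l m 𝕜} (hA : A.PosSemidef) (hB : B * A * Bᴴ = 0) :
    B * A = 0 := by
  obtain ⟨hs, hss⟩ : (CFC.sqrt A)ᴴ = CFC.sqrt A ∧ CFC.sqrt A * CFC.sqrt A = A :=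
    ⟨(CFC.sqrt_nonneg A).posSemidef.1, CFC.sqrt_mul_sqrt_self A hA.nonneg⟩
  have : B * CFC.sqrt A = 0 := by
    rw [← self_mul_conjTranspose_eq_zero, conjTranspose_mul, hs, Matrix.mul_assoc,
      ← Matrix.mul_assoc (CFC.sqrt A), hss, ← Matrix.mul_assoc, hB]
  rw [← hss, ← Matrix.mul_assoc, this, Matrix.zero_mul]

end Matrix

section Lindblad

variable {n : ℕ} {ι : Type*} [Fintype ι] {H : Matrix (Fin n) (Fin n) ℂ}
  {h : ι → Matrix (Fin n) (Fin n) ℂ} {ρ Q : Matrix (Fin n) (Fin n) ℂ}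

theorem mul_lindblad_mul_of_mul_eq_zero (hQ : Qᴴ = Q) (hQρ : Q * ρ = 0) (hρQ : ρ * Q = 0) :
    Q * lindblad H h ρ * Q = ∑ α, Q * h α * ρ * (Q * h α)ᴴ := by
  have hQρX : ∀ X, Q * (ρ * X) = 0 := fun X => by rw [← mul_assoc, hQρ, zero_mul]
  simp [lindblad, conjTranspose_mul, hQ, add_mul, mul_add, sub_mul, mul_sub, Finset.sum_mul,
    Finset.mul_sum, mul_assoc, hρQ, hQρX]

theorem mul_jump_mul_eq_zero_of_lindblad_eq_zero (hρ : ρ.PosSemidef) (hstat : lindblad H h ρ = 0)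
    (hQ : Qᴴ = Q) (hQρ : Q * ρ = 0) (hρQ : ρ * Q = 0) (α : ι) : Q * h α * ρ = 0 := by
  have hsum := mul_lindblad_mul_of_mul_eq_zero (H := H) (h := h) hQ hQρ hρQ
  rw [hstat, mul_zero, zero_mul, eq_comm, Finset.sum_eq_zero_iff_of_nonneg fun β _ =>
    nonneg_iff_posSemidef.mpr (hρ.mul_mul_conjTranspose_same _)] at hsum
  exact hρ.mul_eq_zero_of_mul_mul_conjTranspose_eq_zero (hsum α (Finset.mem_univ α))

theorem mul_lindblad_of_mul_eq_zero (hQρ : Q * ρ = 0) (hjump : ∀ α, Q * h α * ρ = 0) :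
    Q * lindblad H h ρ = -(Q * (Complex.I • H + (1/2 : ℂ) • ∑ α, (h α)ᴴ * h α) * ρ) := by
  have hQρX : ∀ X, Q * (ρ * X) = 0 := fun X => by rw [← mul_assoc, hQρ, zero_mul]
  have hjumpX : ∀ α X, Q * (h α * (ρ * X)) = 0 := fun α X => by
    rw [← mul_assoc, ← mul_assoc, hjump, zero_mul]
  simp only [lindblad, mul_add, add_mul, mul_sub, mul_neg, neg_smul, smul_add, neg_add_rev,
    Algebra.mul_smul_comm, Algebra.smul_mul_assoc, mul_assoc, hQρX, hjumpX, Finset.mul_sum,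
    Finset.sum_mul, Finset.smul_sum, Finset.sum_sub_distrib, Finset.sum_const_zero, smul_zero,
    sub_zero, zero_sub, add_zero]
  rw [add_comm]

theorem conjTranspose_I_smul_add_half_smul_sum (hH : H.IsHermitian) :
    (Complex.I • H + (1/2 : ℂ) • ∑ α, (h α)ᴴ * h α)ᴴ =
      -(Complex.I • H - (1/2 : ℂ) • ∑ α, (h α)ᴴ * h α) := by
  have hhalf : star (1/2 : ℂ) = 1/2 := by simp
  simp only [conjTranspose_add, conjTranspose_smul, conjTranspose_sum, conjTranspose_mul,
    conjTranspose_conjTranspose, hH.eq, Complex.star_def, Complex.conj_I, hhalf]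
  module

end Lindblad

theorem stmt7_general {n : ℕ} {ι : Type*} [Fintype ι]
    (H : Matrix (Fin n) (Fin n) ℂ) (hH : H.IsHermitian)
    (h : ι → Matrix (Fin n) (Fin n) ℂ)
    (ρ : Matrix (Fin n) (Fin n) ℂ) (hρ : ρ.PosSemidef)
    (hstat : lindblad H h ρ = 0)
    (P : Matrix (Fin n) (Fin n) ℂ) (hP : P * P = P) (hPh : Pᴴ = P)
    (hrange : LinearMap.range ρ.mulVecLin = LinearMap.range P.mulVecLin) :
    (∀ α, h α * P = P * (h α * P)) ∧
      P * (Complex.I • H - (1/2 : ℂ) • ∑ α, (h α)ᴴ * h α) * (1 - P) = 0 := by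
  set Q := 1 - P
  have hQ : Qᴴ = Q := by simp [Q, hPh]
  have hPρ : P * ρ = ρ := mul_eq_self_of_range_le hP hrange.le
  have hρP : ρ * P = ρ := by simpa [hPh, hρ.1.eq] using congrArg conjTranspose hPρ
  have hQρ : Q * ρ = 0 := by simp [Q, sub_mul, hPρ]
  have hρQ : ρ * Q = 0 := by simp [Q, mul_sub, hρP]
  have hjump := mul_jump_mul_eq_zero_of_lindblad_eq_zero hρ hstat hQ hQρ hρQ
  have hkill : ∀ X, X * ρ = 0 → X * P = 0 := fun X => mul_eq_zero_of_range_le hrange.ge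
  refine ⟨fun α => ?_, ?_⟩
  · have hQhP := hkill _ (hjump α)
    rw [sub_mul, one_mul, sub_mul, sub_eq_zero] at hQhP
    rwa [← mul_assoc]
  · have hQKP : Q * (Complex.I • H + (1/2 : ℂ) • ∑ α, (h α)ᴴ * h α) * P = 0 := hkill _ <| by
      rw [← neg_eq_zero, ← mul_lindblad_of_mul_eq_zero hQρ hjump, hstat, mul_zero]
    have := congrArg conjTranspose hQKP
    rwa [conjTranspose_mul, conjTranspose_mul, hPh, hQ, conjTranspose_I_smul_add_half_smul_sum hH,
      conjTranspose_zero, neg_mul, mul_neg, neg_eq_zero, ← mul_assoc] at this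

/-- If `ρ` is a stationary state and `P` projects onto its range, then `P ℋ` is
collecting: lazy, and `P (iH - ½ ∑ h_α† h_α) P^⊥ = 0`. -/
theorem stmt7 {n : ℕ} {ι : Type*} [Fintype ι]
    (H : Matrix (Fin n) (Fin n) ℂ) (hH : H.IsHermitian)
    (h : ι → Matrix (Fin n) (Fin n) ℂ)
    (ρ : Matrix (Fin n) (Fin n) ℂ) (hρ : ρ.PosSemidef) (htr : ρ.trace = 1)
    (hstat : lindblad H h ρ = 0)
    (P : Matrix (Fin n) (Fin n) ℂ) (hP : P * P = P) (hPh : Pᴴ = P)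
    (hrange : LinearMap.range ρ.mulVecLin = LinearMap.range P.mulVecLin) :
    (∀ α, h α * P = P * (h α * P)) ∧
      P * (Complex.I • H - (1/2 : ℂ) • ∑ α, (h α)ᴴ * h α) * (1 - P) = 0 :=
  stmt7_general H hH h ρ hρ hstat P hP hPh hrange
end

section
/- Let P_i, P_j project onto two minimal enclosures of a Lindblad generator with unique full-rank stationary states ρ_i, ρ_j. If there exists a unitary U commuting with H and all h_α with U P_j = P_i U, then U ρ_j U† = ρ_i and the off-diagonal block U ρ_j is a stationary eigenmatrix: D(U ρ_j) = 0. -/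
open Matrix
open scoped Matrix.Norms.L2Operator ComplexOrder

/-!
The generator `D` commutes with left and right multiplication by any matrix commuting with `H`,
every `h α` and every `(h α)ᴴ`. A unitary `U` commuting with `H` and the `h α` has this property,
and so does `U⁻¹ = Uᴴ` (taking adjoints gives commutation with the `(h α)ᴴ`). Hence
`D (U ρ_j) = U D ρ_j = 0` and `D (U ρ_j Uᴴ) = 0`; since `U ρ_j Uᴴ` is moreover a density matrix
supported on `P_i H` (because `U P_j = P_i U`), uniqueness of `ρ_i` identifies it with `ρ_i`.
-/

section Lindblad

variable {n : ℕ} {ι : Type*} [Fintype ι] {H : Matrix (Fin n) (Fin n) ℂ}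
  {h : ι → Matrix (Fin n) (Fin n) ℂ}

theorem lindblad_mul_left {A : Matrix (Fin n) (Fin n) ℂ} (hAH : Commute A H)
    (hAh : ∀ α, Commute A (h α)) (hAh' : ∀ α, Commute A (h α)ᴴ) (ρ : Matrix (Fin n) (Fin n) ℂ) :
    lindblad H h (A * ρ) = A * lindblad H h ρ := by
  have hH := hAH.symm.left_comm
  have hh := fun α => (hAh α).symm.left_comm
  have hh' := fun α => (hAh' α).symm.left_comm
  simp only [lindblad, Matrix.mul_add, Matrix.mul_sub, Matrix.mul_sum, Matrix.mul_smul, mul_assoc,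
    hH, hh, hh']

theorem lindblad_mul_right {B : Matrix (Fin n) (Fin n) ℂ} (hBH : Commute B H)
    (hBh : ∀ α, Commute B (h α)) (hBh' : ∀ α, Commute B (h α)ᴴ) (ρ : Matrix (Fin n) (Fin n) ℂ) :
    lindblad H h (ρ * B) = lindblad H h ρ * B := by
  have hH := hBH.right_comm
  have hh := fun α => (hBh α).right_comm
  have hh' := fun α => (hBh' α).right_comm
  simp only [lindblad, Matrix.add_mul, Matrix.sub_mul, Matrix.sum_mul, Matrix.smul_mul,
    ← mul_assoc, hH, hh, hh']

end Lindblad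

theorem stmt15_general {n : ℕ} {ι : Type*} [Fintype ι]
    (H : Matrix (Fin n) (Fin n) ℂ)
    (h : ι → Matrix (Fin n) (Fin n) ℂ)
    (Pi Pj : Matrix (Fin n) (Fin n) ℂ)
    (ρi ρj : Matrix (Fin n) (Fin n) ℂ)
    (hρiuniq : ∀ σ : Matrix (Fin n) (Fin n) ℂ, σ.PosSemidef → σ.trace = 1 →
      σ = Pi * σ * Pi → lindblad H h σ = 0 → σ = ρi)
    (hρj : ρj.PosSemidef) (hρjtr : ρj.trace = 1) (hρjsupp : ρj = Pj * ρj * Pj)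
    (hρjstat : lindblad H h ρj = 0)
    (U : Matrix (Fin n) (Fin n) ℂ) (hU : Uᴴ * U = 1) (hU' : U * Uᴴ = 1)
    (hUH : U * H = H * U) (hUhα : ∀ α, U * h α = h α * U)
    (hint : U * Pj = Pi * U) :
    U * ρj * Uᴴ = ρi ∧ lindblad H h (U * ρj) = 0 := by
  let u : (Matrix (Fin n) (Fin n) ℂ)ˣ := ⟨U, Uᴴ, hU', hU⟩
  have hUadj_h : ∀ α, Commute Uᴴ (h α) := fun α => Commute.units_inv_left (u := u) (hUhα α)
  have hU_hadj : ∀ α, Commute U (h α)ᴴ := fun α => by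
    simpa only [star_eq_conjTranspose, conjTranspose_conjTranspose] using commute_star_star.mpr (hUadj_h α)
  have hUadj_H : Commute Uᴴ H := Commute.units_inv_left (u := u) hUH
  have hUadj_hadj : ∀ α, Commute Uᴴ (h α)ᴴ := fun α => Commute.units_inv_left (u := u) (hU_hadj α)
  have hPjU : Pj * Uᴴ = Uᴴ * Pi := (SemiconjBy.units_inv_symm_left (a := u) hint).symm
  have hstat : lindblad H h (U * ρj) = 0 := by
    rw [lindblad_mul_left hUH hUhα hU_hadj, hρjstat, mul_zero]
  refine ⟨hρiuniq _ (hρj.mul_mul_conjTranspose_same U) ?_ ?_ ?_, hstat⟩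
  · rw [Matrix.trace_mul_cycle, hU, one_mul, hρjtr]
  · calc U * ρj * Uᴴ = U * (Pj * ρj * Pj) * Uᴴ := by rw [← hρjsupp]
      _ = U * Pj * ρj * (Pj * Uᴴ) := by simp only [mul_assoc]
      _ = Pi * (U * ρj * Uᴴ) * Pi := by rw [hint, hPjU]; simp only [mul_assoc]
  · rw [lindblad_mul_right hUadj_H hUadj_h hUadj_hadj, hstat, zero_mul]

/-- If a unitary `U` commuting with `H` and all `h α` intertwines two minimal enclosures
(`U P_j = P_i U`), then it maps the unique stationary state `ρ_j` to `ρ_i`, and the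
off-diagonal block `U ρ_j` is a stationary eigenmatrix of the Lindblad generator. -/
theorem stmt15 {n : ℕ} {ι : Type*} [Fintype ι]
    (H : Matrix (Fin n) (Fin n) ℂ) (hH : H.IsHermitian)
    (h : ι → Matrix (Fin n) (Fin n) ℂ)
    (Pi Pj : Matrix (Fin n) (Fin n) ℂ)
    (hPi : Pi * Pi = Pi) (hPih : Piᴴ = Pi) (hPj : Pj * Pj = Pj) (hPjh : Pjᴴ = Pj)
    (horth : Pi * Pj = 0)
    (hPiH : Pi * H = H * Pi) (hPihα : ∀ α, Pi * h α = h α * Pi)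
    (hPjH : Pj * H = H * Pj) (hPjhα : ∀ α, Pj * h α = h α * Pj)
    (ρi ρj : Matrix (Fin n) (Fin n) ℂ)
    (hρi : ρi.PosSemidef) (hρitr : ρi.trace = 1) (hρisupp : ρi = Pi * ρi * Pi)
    (hρistat : lindblad H h ρi = 0) (hρirank : ρi.rank = Pi.rank)
    (hρiuniq : ∀ σ : Matrix (Fin n) (Fin n) ℂ, σ.PosSemidef → σ.trace = 1 →
      σ = Pi * σ * Pi → lindblad H h σ = 0 → σ = ρi)
    (hρj : ρj.PosSemidef) (hρjtr : ρj.trace = 1) (hρjsupp : ρj = Pj * ρj * Pj)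
    (hρjstat : lindblad H h ρj = 0) (hρjrank : ρj.rank = Pj.rank)
    (hρjuniq : ∀ σ : Matrix (Fin n) (Fin n) ℂ, σ.PosSemidef → σ.trace = 1 →
      σ = Pj * σ * Pj → lindblad H h σ = 0 → σ = ρj)
    (U : Matrix (Fin n) (Fin n) ℂ) (hU : Uᴴ * U = 1) (hU' : U * Uᴴ = 1)
    (hUH : U * H = H * U) (hUhα : ∀ α, U * h α = h α * U)
    (hint : U * Pj = Pi * U) :
    U * ρj * Uᴴ = ρi ∧ lindblad H h (U * ρj) = 0 :=
  stmt15_general H h Pi Pj ρi ρj hρiuniq hρj hρjtr hρjsupp hρjstat U hU hU' hUH hUhα hint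
end

section
/- Let F be an operator with D†(F) = irF for a real number r, supported as F = P_ℓ F P_j between two minimal enclosures, and suppose V := F/‖F†F‖^{1/2} satisfies V†V = P_j and VV† = P_ℓ. Then taking the trace of V†D†(V) = irP_j and applying the Cauchy–Schwarz and AM–GM inequalities forces h_α V = V h_α for all α and HV = V(H + r). -/
open Matrix
open scoped Matrix.Norms.L2Operator ComplexOrder

/-- The Heisenberg-picture (adjoint) Lindblad generator. -/
noncomputable def lindbladDual {n : ℕ} {ι : Type*} [Fintype ι]
    (H : Matrix (Fin n) (Fin n) ℂ) (h : ι → Matrix (Fin n) (Fin n) ℂ)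
    (F : Matrix (Fin n) (Fin n) ℂ) : Matrix (Fin n) (Fin n) ℂ :=
  Complex.I • (H * F - F * H) +
    ∑ α, ((h α)ᴴ * F * h α - (1/2 : ℂ) • ((h α)ᴴ * h α * F + F * ((h α)ᴴ * h α)))

/-!
For any `V`, expanding the generator gives the dissipation identity
`D†(V†V) - V† D†(V) - D†(V†) V = ∑ α, [h_α, V]† [h_α, V]`.
If `D†(V) = c V` with `c` purely imaginary, the two middle terms cancel; if moreover `V†V`
commutes with every `h_α`, the trace of `D†(V†V)` vanishes, so the positive matrices
`[h_α, V]† [h_α, V]` have zero total trace and every `h_α` commutes with `V`.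
Running the same argument for `V†` (an eigenvector for `-c`, with `V V†` commuting with the `h_α`)
shows that the `h_α†` commute with `V` as well; then the dissipative part of `D†(V)` vanishes and
`D†(V) = i [H, V] = i r V`.
-/

section

variable {n : ℕ} {ι : Type*} [Fintype ι]

theorem lindbladDual_smul (H : Matrix (Fin n) (Fin n) ℂ) (h : ι → Matrix (Fin n) (Fin n) ℂ)
    (a : ℂ) (F : Matrix (Fin n) (Fin n) ℂ) :
    lindbladDual H h (a • F) = a • lindbladDual H h F := by
  simp only [lindbladDual, Matrix.mul_smul, Matrix.smul_mul, smul_add, smul_sub,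
    Finset.smul_sum, smul_comm a]

theorem conjTranspose_lindbladDual {H : Matrix (Fin n) (Fin n) ℂ} (hH : H.IsHermitian)
    (h : ι → Matrix (Fin n) (Fin n) ℂ) (F : Matrix (Fin n) (Fin n) ℂ) :
    (lindbladDual H h F)ᴴ = lindbladDual H h Fᴴ := by
  simp only [lindbladDual, conjTranspose_add, conjTranspose_sub, conjTranspose_smul,
    conjTranspose_mul, conjTranspose_conjTranspose, conjTranspose_sum, hH.eq,
    Complex.star_def, Complex.conj_I, map_div₀, map_one, map_ofNat, mul_assoc]
  congr 1
  · rw [neg_smul, ← smul_neg, neg_sub]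
  · exact Finset.sum_congr rfl fun α _ => by rw [add_comm]

theorem lindbladDual_conjTranspose_mul_self (H : Matrix (Fin n) (Fin n) ℂ)
    (h : ι → Matrix (Fin n) (Fin n) ℂ) (V : Matrix (Fin n) (Fin n) ℂ) :
    lindbladDual H h (Vᴴ * V) = Vᴴ * lindbladDual H h V + lindbladDual H h Vᴴ * V
      + ∑ α, (h α * V - V * h α)ᴴ * (h α * V - V * h α) := by
  have hamiltonian : Complex.I • (H * (Vᴴ * V) - Vᴴ * V * H)
      = Vᴴ * (Complex.I • (H * V - V * H)) + Complex.I • (H * Vᴴ - Vᴴ * H) * V := by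
    simp only [Matrix.mul_smul, Matrix.smul_mul, Matrix.mul_sub, Matrix.sub_mul,
      Matrix.mul_assoc]
    module
  have dissipator : ∀ W : Matrix (Fin n) (Fin n) ℂ,
      Wᴴ * (Vᴴ * V) * W - (1/2 : ℂ) • (Wᴴ * W * (Vᴴ * V) + Vᴴ * V * (Wᴴ * W))
        = Vᴴ * (Wᴴ * V * W - (1/2 : ℂ) • (Wᴴ * W * V + V * (Wᴴ * W)))
          + (Wᴴ * Vᴴ * W - (1/2 : ℂ) • (Wᴴ * W * Vᴴ + Vᴴ * (Wᴴ * W))) * V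
          + (W * V - V * W)ᴴ * (W * V - V * W) := by
    intro W
    simp only [conjTranspose_sub, conjTranspose_mul, Matrix.mul_sub, Matrix.sub_mul,
      Matrix.mul_add, Matrix.add_mul, Matrix.mul_smul, Matrix.smul_mul, Matrix.mul_assoc]
    module
  simp only [lindbladDual, Matrix.mul_add, Matrix.add_mul, Matrix.mul_sum, Matrix.sum_mul,
    hamiltonian, fun α => dissipator (h α), Finset.sum_add_distrib]
  abel

theorem trace_lindbladDual_eq_zero (H : Matrix (Fin n) (Fin n) ℂ)
    {h : ι → Matrix (Fin n) (Fin n) ℂ} {X : Matrix (Fin n) (Fin n) ℂ}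
    (hX : ∀ α, Commute X (h α)) : (lindbladDual H h X).trace = 0 := by
  have dissipator : ∀ α, (h α)ᴴ * X * h α = (h α)ᴴ * h α * X := fun α => by
    rw [Matrix.mul_assoc, (hX α).eq, Matrix.mul_assoc]
  simp only [lindbladDual, dissipator, trace_add, trace_smul, trace_sub, trace_sum,
    trace_mul_comm H X, sub_self, smul_zero, zero_add]
  refine Finset.sum_eq_zero fun α _ => ?_
  rw [trace_mul_comm X]
  ring

theorem commute_of_lindbladDual_eq_smul {H : Matrix (Fin n) (Fin n) ℂ} (hH : H.IsHermitian)
    {h : ι → Matrix (Fin n) (Fin n) ℂ} {V : Matrix (Fin n) (Fin n) ℂ} {c : ℂ}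
    (hc : star c = -c) (hV : lindbladDual H h V = c • V)
    (hVV : ∀ α, Commute (Vᴴ * V) (h α)) (α : ι) : h α * V = V * h α := by
  have hVadj : lindbladDual H h Vᴴ = star c • Vᴴ := by
    rw [← conjTranspose_lindbladDual hH, hV, conjTranspose_smul]
  have hdissipation : ∑ β, (h β * V - V * h β)ᴴ * (h β * V - V * h β)
      = lindbladDual H h (Vᴴ * V) := by
    rw [lindbladDual_conjTranspose_mul_self, hV, hVadj, hc, Matrix.mul_smul, Matrix.smul_mul,
      neg_smul, add_neg_cancel, zero_add]
  have htrace : ∑ β, ((h β * V - V * h β)ᴴ * (h β * V - V * h β)).trace = 0 := by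
    rw [← trace_sum, hdissipation, trace_lindbladDual_eq_zero H hVV]
  rw [← sub_eq_zero, ← trace_conjTranspose_mul_self_eq_zero_iff]
  exact (Finset.sum_eq_zero_iff_of_nonneg fun β _ =>
    (posSemidef_conjTranspose_mul_self _).trace_nonneg).mp htrace α (Finset.mem_univ α)

theorem lindbladDual_eq_of_commute (H : Matrix (Fin n) (Fin n) ℂ)
    {h : ι → Matrix (Fin n) (Fin n) ℂ} {V : Matrix (Fin n) (Fin n) ℂ}
    (hV : ∀ α, h α * V = V * h α) (hVadj : ∀ α, (h α)ᴴ * V = V * (h α)ᴴ) :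
    lindbladDual H h V = Complex.I • (H * V - V * H) := by
  have dissipator : ∀ α, (h α)ᴴ * V * h α
      - (1/2 : ℂ) • ((h α)ᴴ * h α * V + V * ((h α)ᴴ * h α)) = 0 := fun α => by
    rw [Matrix.mul_assoc _ (h α), hV, ← Matrix.mul_assoc, hVadj, Matrix.mul_assoc]
    module
  simp only [lindbladDual, dissipator, Finset.sum_const_zero, add_zero]

end

theorem stmt16_general {n : ℕ} {ι : Type*} [Fintype ι]
    (H : Matrix (Fin n) (Fin n) ℂ) (hH : H.IsHermitian)
    (h : ι → Matrix (Fin n) (Fin n) ℂ)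
    (Pj Pl : Matrix (Fin n) (Fin n) ℂ)
    (hPjhα : ∀ α, Pj * h α = h α * Pj)
    (hPlhα : ∀ α, Pl * h α = h α * Pl)
    (F : Matrix (Fin n) (Fin n) ℂ) (r : ℝ)
    (hF : lindbladDual H h F = (Complex.I * (r : ℂ)) • F)
    (V : Matrix (Fin n) (Fin n) ℂ)
    (hV : V = ((Real.sqrt ‖Fᴴ * F‖ : ℝ) : ℂ)⁻¹ • F)
    (hViso : Vᴴ * V = Pj) (hViso' : V * Vᴴ = Pl) :
    (∀ α, h α * V = V * h α) ∧ H * V = V * (H + (r : ℂ) • 1) := by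
  have hc : star (Complex.I * r) = -(Complex.I * r) := by simp
  have hDV : lindbladDual H h V = (Complex.I * r) • V := by
    rw [hV, lindbladDual_smul, hF, smul_comm]
  have hDVadj : lindbladDual H h Vᴴ = -(Complex.I * r) • Vᴴ := by
    rw [← conjTranspose_lindbladDual hH, hDV, conjTranspose_smul, hc]
  have hcomm : ∀ α, h α * V = V * h α :=
    commute_of_lindbladDual_eq_smul hH hc hDV (by rwa [hViso])
  have hcommAdj : ∀ α, (h α)ᴴ * V = V * (h α)ᴴ := fun α => by
    have := commute_of_lindbladDual_eq_smul hH (by rw [star_neg, hc]) hDVadj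
      (by rwa [conjTranspose_conjTranspose, hViso']) α
    simpa only [conjTranspose_mul, conjTranspose_conjTranspose] using
      (congrArg conjTranspose this).symm
  refine ⟨hcomm, ?_⟩
  rw [lindbladDual_eq_of_commute H hcomm hcommAdj, mul_smul] at hDV
  have hHV : H * V - V * H = (r : ℂ) • V := smul_right_injective _ Complex.I_ne_zero hDV
  rw [Matrix.mul_add, Matrix.mul_smul, Matrix.mul_one, ← hHV]
  abel

/-- If `D† F = i r F` with `F = P_ℓ F P_j` supported between two enclosures and
`V = F / ‖F†F‖^{1/2}` is a partial isometry with `V†V = P_j`, `V V† = P_ℓ`, then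
`h_α V = V h_α` for all `α` and `H V = V (H + r)`. -/
theorem stmt16 {n : ℕ} {ι : Type*} [Fintype ι]
    (H : Matrix (Fin n) (Fin n) ℂ) (hH : H.IsHermitian)
    (h : ι → Matrix (Fin n) (Fin n) ℂ)
    (Pj Pl : Matrix (Fin n) (Fin n) ℂ)
    (hPj : Pj * Pj = Pj) (hPjh : Pjᴴ = Pj) (hPl : Pl * Pl = Pl) (hPlh : Plᴴ = Pl)
    (hPjH : Pj * H = H * Pj) (hPjhα : ∀ α, Pj * h α = h α * Pj)
    (hPlH : Pl * H = H * Pl) (hPlhα : ∀ α, Pl * h α = h α * Pl)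
    (F : Matrix (Fin n) (Fin n) ℂ) (r : ℝ)
    (hF : lindbladDual H h F = (Complex.I * (r : ℂ)) • F)
    (hFsupp : F = Pl * F * Pj)
    (V : Matrix (Fin n) (Fin n) ℂ)
    (hV : V = ((Real.sqrt ‖Fᴴ * F‖ : ℝ) : ℂ)⁻¹ • F)
    (hViso : Vᴴ * V = Pj) (hViso' : V * Vᴴ = Pl) :
    (∀ α, h α * V = V * h α) ∧ H * V = V * (H + (r : ℂ) • 1) :=
  stmt16_general H hH h Pj Pl hPjhα hPlhα F r hF V hV hViso hViso'
end
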